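/- Let E be a Dedekind complete vector lattice, let (T_α) be a decreasing net of positive order continuous operators on E, and let F be an order dense vector sublattice of E. If T_α x order-converges to 0 in E for every x ∈ F, then T_α x order-converges to 0 in E for every x ∈ E. -/

import Mathlib

/-!
Dominate `|T i x|` by the decreasing net `T i |x|`; it remains to show that its infimum is `0`
for `x ≥ 0`. By order density and Dedekind completeness, `x` is the supremum of the upward
directed set `A = F ∩ [0, x]`, so `x - A` decreases to `0` and, by order continuity of a single
`T i₀`, so does `T i₀ (x - A)`. A lower bound `c` of all `T i x` lies below each `T i₀ (x - y)`,
`y ∈ A`: for `j ≥ i₀` we have `c - T i₀ (x - y) ≤ T j x - T j (x - y) = T j y`, and `T j y → 0`.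
-/

variable (E : Type*) [AddCommGroup E] [ConditionallyCompleteLattice E] [Module ℝ E]
  [CovariantClass E E (· + ·) (· ≤ ·)] [PosSMulMono ℝ E]

/-- The order on order bounded operators: `A ≤ B` iff `A x ≤ B x` for all `x ≥ 0`. -/
def opLE (A B : E →ₗ[ℝ] E) : Prop := ∀ x : E, 0 ≤ x → A x ≤ B x

/-- An operator is order bounded when it maps order bounded sets to order bounded sets. -/
def IsOrderBoundedOp (T : E →ₗ[ℝ] E) : Prop :=
  ∀ a b : E, ∃ c d : E, ∀ x : E, a ≤ x → x ≤ b → c ≤ T x ∧ T x ≤ d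

/-- Band preserving: `T x` lies in the band generated by `x`; equivalently `T x ⊥ y`
whenever `x ⊥ y`. -/
def IsBandPreserving (T : E →ₗ[ℝ] E) : Prop :=
  ∀ x y : E, |x| ⊓ |y| = 0 → |T x| ⊓ |y| = 0

/-- An orthomorphism is an order bounded band preserving linear operator. -/
def IsOrthomorphism (T : E →ₗ[ℝ] E) : Prop :=
  IsOrderBoundedOp E T ∧ IsBandPreserving E T

/-- Membership in the band generated by a set `S` (in an Archimedean vector lattice this is
the double disjoint complement of `S`). -/
def memBandGen (S : Set E) (w : E) : Prop :=
  ∀ u : E, (∀ s ∈ S, |u| ⊓ |s| = 0) → |u| ⊓ |w| = 0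

/-- `P` is the band projection onto the band `B`: it maps into `B` and `x - P x` is
disjoint from `B` for every `x`. -/
def IsBandProjectionOnto (B : Set E) (P : E →ₗ[ℝ] E) : Prop :=
  (∀ x : E, P x ∈ B) ∧ (∀ x : E, ∀ b ∈ B, |x - P x| ⊓ |b| = 0)

/-- Order convergence of a net: there is a downward directed set `D` with infimum `0`
such that the net is eventually dominated by every member of `D`. -/
def OrderConvNet {ι : Type*} [Preorder ι] (y : ι → E) (l : E) : Prop :=
  ∃ D : Set E, D.Nonempty ∧ DirectedOn (· ≥ ·) D ∧ IsGLB D 0 ∧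
    ∀ d ∈ D, ∃ i₀ : ι, ∀ i : ι, i₀ ≤ i → |y i - l| ≤ d

/-- Unbounded order convergence of a net. -/
def UOConvNet {ι : Type*} [Preorder ι] (y : ι → E) (l : E) : Prop :=
  ∀ u : E, 0 ≤ u → OrderConvNet E (fun i => |y i - l| ⊓ u) 0

/-- Order convergence of a net of operators, in the operator order of the order bounded
operators: there is a downward directed set `D` of operators whose infimum among the
order bounded operators is `0`, eventually dominating `|T i - L|`. -/
def OpOrderConvNet {ι : Type*} [Preorder ι] (T : ι → E →ₗ[ℝ] E) (L : E →ₗ[ℝ] E) : Prop :=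
  ∃ D : Set (E →ₗ[ℝ] E), D.Nonempty ∧
    DirectedOn (fun A B => opLE E B A) D ∧
    (∀ d ∈ D, opLE E 0 d) ∧
    (∀ C : E →ₗ[ℝ] E, IsOrderBoundedOp E C → (∀ d ∈ D, opLE E C d) → opLE E C 0) ∧
    ∀ d ∈ D, ∃ i₀ : ι, ∀ i : ι, i₀ ≤ i → opLE E (L - T i) d ∧ opLE E (T i - L) d

section LatticeOrderedGroup

variable {V : Type*} [AddCommGroup V]

theorem abs_map_le_map_abs [Lattice V] [AddLeftMono V] {W : Type*} [AddCommGroup W]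
    [Lattice W] [AddLeftMono W] {G : Type*} [FunLike G V W] [AddMonoidHomClass G V W] (f : G)
    (hf : ∀ x, 0 ≤ x → 0 ≤ f x) (x : V) : |f x| ≤ f |x| := by
  refine abs_le'.2 ⟨?_, ?_⟩
  · simpa [map_sub] using hf (|x| - x) (sub_nonneg.2 (le_abs_self x))
  · have h := hf (x + |x|) (by simpa using add_le_add_right (neg_le_abs x) x)
    rw [map_add] at h
    exact neg_le_iff_add_nonneg'.2 h

theorem isGLB_sub_image_of_isLUB [PartialOrder V] [AddLeftMono V]
    {A : Set V} {x : V} (h : IsLUB A x) : IsGLB ((x - ·) '' A) 0 := by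
  have h' := (OrderIso.subLeft x).isLUB_image'.2 h
  rwa [OrderIso.subLeft_apply, sub_self] at h'

variable [ConditionallyCompleteLattice V] {ι : Type*} [Preorder ι]

theorem OrderConvNet.of_abs_le_antitone [Nonempty ι] [IsDirected ι (· ≤ ·)] {y u : ι → V}
    (hu : Antitone u) (hu0 : IsGLB (Set.range u) 0) (hyu : ∀ i, |y i| ≤ u i) :
    OrderConvNet V y 0 :=
  ⟨Set.range u, Set.range_nonempty u, hu.directed_ge.directedOn_range, hu0,
    Set.forall_mem_range.2 fun i => ⟨i, fun j hij => by simpa using (hyu j).trans (hu hij)⟩⟩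

variable [AddLeftMono V]

theorem isLUB_inter_Icc_of_orderDense {S : Type*} [SetLike S V] [AddSubmonoidClass S V] (F : S)
    (hdense : ∀ x : V, 0 < x → ∃ y ∈ F, 0 < y ∧ y ≤ x) {x : V} (hx : 0 ≤ x) :
    IsLUB ((F : Set V) ∩ Set.Icc 0 x) x := by
  set A := (F : Set V) ∩ Set.Icc 0 x
  have hA : A.Nonempty := ⟨0, zero_mem F, le_rfl, hx⟩
  have hAbdd : BddAbove A := ⟨x, fun y hy => hy.2.2⟩
  suffices hsup : sSup A = x from hsup ▸ isLUB_csSup hA hAbdd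
  have hsx : sSup A ≤ x := csSup_le hA fun y hy => hy.2.2
  refine le_antisymm hsx (by_contra fun hxs => ?_)
  have hlt : sSup A < x := lt_of_le_not_ge hsx hxs
  obtain ⟨y₀, hy₀F, hy₀pos, hy₀le⟩ := hdense (x - sSup A) (sub_pos.2 hlt)
  have hshift : ∀ y ∈ A, y + y₀ ∈ A := fun y hy =>
    ⟨add_mem hy.1 hy₀F, add_nonneg hy.2.1 hy₀pos.le,
      calc y + y₀ ≤ sSup A + (x - sSup A) := add_le_add (le_csSup hAbdd hy) hy₀le
        _ = x := add_sub_cancel _ _⟩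
  have hle : sSup A ≤ sSup A - y₀ :=
    csSup_le hA fun y hy => le_sub_iff_add_le.2 (le_csSup hAbdd (hshift y hy))
  exact hy₀pos.not_ge ((le_sub_self_iff _).1 hle)

theorem OrderConvNet.le_of_eventually_le [IsDirected ι (· ≤ ·)] {y : ι → V} {l a : V}
    (hy : OrderConvNet V y l) (ha : ∃ i₀, ∀ i, i₀ ≤ i → a ≤ y i) : a ≤ l := by
  obtain ⟨D, -, -, hD0, hDev⟩ := hy
  obtain ⟨i₀, ha⟩ := ha
  refine sub_nonpos.1 (hD0.2 fun d hd => ?_)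
  obtain ⟨i₁, hi₁⟩ := hDev d hd
  obtain ⟨j, hj₀, hj₁⟩ := directed_of (· ≤ ·) i₀ i₁
  exact (sub_le_sub_right (ha j hj₀) l).trans ((le_abs_self _).trans (hi₁ j hj₁))

variable [Module ℝ V] [IsDirected ι (· ≤ ·)] {T : ι → V →ₗ[ℝ] V}

theorem le_apply_sub_of_mem_lowerBounds (hdec : ∀ i j : ι, i ≤ j → opLE V (T j) (T i))
    {x y : V} (hyx : y ≤ x) (hy : OrderConvNet V (fun i => T i y) 0) {c : V}
    (hc : c ∈ lowerBounds (Set.range fun i => T i x)) (i₀ : ι) : c ≤ T i₀ (x - y) := by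
  refine sub_nonpos.1 (hy.le_of_eventually_le ⟨i₀, fun j hj => ?_⟩)
  calc c - T i₀ (x - y) ≤ T j x - T j (x - y) :=
        sub_le_sub (hc ⟨j, rfl⟩) (hdec i₀ j hj _ (sub_nonneg.2 hyx))
    _ = T j y := by rw [← map_sub, sub_sub_cancel]

theorem isGLB_range_apply_of_orderDense (hdec : ∀ i j : ι, i ≤ j → opLE V (T j) (T i))
    (hpos : ∀ i, opLE V 0 (T i)) {i₀ : ι}
    (hoc : ∀ D : Set V, D.Nonempty → DirectedOn (· ≥ ·) D → IsGLB D 0 → IsGLB ((T i₀) '' D) 0)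
    {S : Type*} [SetLike S V] [AddSubmonoidClass S V] (F : S)
    (hlat : ∀ x y : V, x ∈ F → y ∈ F → x ⊔ y ∈ F)
    (hdense : ∀ x : V, 0 < x → ∃ y ∈ F, 0 < y ∧ y ≤ x)
    (hF : ∀ x ∈ F, OrderConvNet V (fun i => T i x) 0) {x : V} (hx : 0 ≤ x) :
    IsGLB (Set.range fun i => T i x) 0 := by
  refine ⟨Set.forall_mem_range.2 fun i => hpos i x hx, fun c hc => ?_⟩
  set A := (F : Set V) ∩ Set.Icc 0 x
  have hAdir : DirectedOn (· ≤ ·) A := directedOn_of_sup_mem fun y z hy hz =>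
    ⟨hlat y z hy.1 hz.1, hy.2.1.trans le_sup_left, sup_le hy.2.2 hz.2.2⟩
  have hT0 := hoc ((x - ·) '' A) ⟨x - 0, 0, ⟨zero_mem F, le_rfl, hx⟩, rfl⟩
    (hAdir.mono_comp (g := (x - ·)) fun _ _ h => sub_le_sub_left h x)
    (isGLB_sub_image_of_isLUB (isLUB_inter_Icc_of_orderDense F hdense hx))
  refine hT0.2 ?_
  rintro _ ⟨_, ⟨y, hy, rfl⟩, rfl⟩
  exact le_apply_sub_of_mem_lowerBounds hdec hy.2.2 (hF y hy.1) hc i₀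

end LatticeOrderedGroup

/-- if a decreasing net of positive order continuous operators on a Dedekind
complete vector lattice converges in order to `0` pointwise on an order dense vector
sublattice `F`, then it converges in order to `0` pointwise on all of `E`. (Order
continuity of a positive operator is expressed by preservation of infima of downward
directed sets.) -/
theorem stmt13
    {ι : Type*} [Preorder ι] [IsDirected ι (· ≤ ·)] [Nonempty ι]
    (T : ι → E →ₗ[ℝ] E)
    (hdec : ∀ i j : ι, i ≤ j → opLE E (T j) (T i))
    (hpos : ∀ i, opLE E 0 (T i))
    (hoc : ∀ i, ∀ D : Set E, D.Nonempty → DirectedOn (· ≥ ·) D → IsGLB D 0 →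
      IsGLB ((T i) '' D) 0)
    (F : Submodule ℝ E)
    (hlat : ∀ x y : E, x ∈ F → y ∈ F → x ⊔ y ∈ F)
    (hdense : ∀ x : E, 0 < x → ∃ y ∈ F, 0 < y ∧ y ≤ x)
    (hF : ∀ x ∈ F, OrderConvNet E (fun i => T i x) 0) :
    ∀ x : E, OrderConvNet E (fun i => T i x) 0 := by
  intro x
  obtain ⟨i₀⟩ := ‹Nonempty ι›
  exact OrderConvNet.of_abs_le_antitone (u := fun i => T i |x|)
    (fun i j hij => hdec i j hij _ (abs_nonneg x))
    (isGLB_range_apply_of_orderDense hdec hpos (hoc i₀) F hlat hdense hF (abs_nonneg x))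
    (fun i => abs_map_le_map_abs (T i) (hpos i) x)
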